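/- arXiv:1810.02273 — 2 statements merged into one kernel-verified Lean document; each statement's English description precedes it below -/
import Mathlib

section
/- With notation as in the inert-prime zeta integral setting: if φ₀ is the normalized spherical vector of σ = I_{GL₂(E)}(χ,ψ) and U(ℓ) the Hecke operator whose action on the Whittaker model satisfies 𝒲_{U(ℓ)φ₀}(diag(y,1)) = 0 for v(y) < 0 and = ℓ²𝒲_{φ₀}(diag(ℓy,1)) for v(y) ≥ 0, then Z(σ, η, U(ℓ)φ₀, s) = (ℓ^{s+1}/η(ℓ))·[L(η²χ_σ, 2s)^{−1} − L(As(σ⊗η), s)^{−1}]. -/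
/-!
The valuation pushes the normalized Haar measure of `ℚ_ℓˣ` forward to counting measure on `ℤ`,
so the zeta integral of a function of `|y|` supported on `|y| ≤ 1` is the series of its values on
the shells `|y| = ℓ⁻ᵐ`. For `U(ℓ)φ₀` the value on the `m`-th shell is
`ℓ (α² (tα)ᵐ - β² (tβ)ᵐ) / (α - β)` with `t = η(ℓ) ℓ⁻ˢ`, so for `Re s` large the integral is a
difference of two geometric series, and multiplying by the Euler factors leaves an identity of
rational functions in `t`.
-/

open MeasureTheory

namespace Padic

variable {p : ℕ} [Fact p.Prime]

theorem norm_units_eq_zpow_iff (y : ℚ_[p]ˣ) (n : ℤ) :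
    ‖(y : ℚ_[p])‖ = (p : ℝ) ^ (-n) ↔ (y : ℚ_[p]).valuation = n := by
  have hp : (1 : ℝ) < p := mod_cast (Fact.out : p.Prime).one_lt
  rw [norm_eq_zpow_neg_valuation y.ne_zero, (zpow_right_injective₀ (by linarith) hp.ne').eq_iff,
    neg_inj]

theorem measurable_units_valuation [MeasurableSpace ℚ_[p]ˣ] [BorelSpace ℚ_[p]ˣ] :
    Measurable fun y : ℚ_[p]ˣ => (y : ℚ_[p]).valuation := by
  refine measurable_to_countable' fun n => ?_
  have hshell : (fun y : ℚ_[p]ˣ => (y : ℚ_[p]).valuation) ⁻¹' {n} =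
      (fun y : ℚ_[p]ˣ => ‖(y : ℚ_[p])‖) ⁻¹' {(p : ℝ) ^ (-n)} := by
    ext y
    exact (norm_units_eq_zpow_iff y n).symm
  rw [hshell]
  exact (continuous_norm.comp Units.continuous_val).measurable (measurableSet_singleton _)

theorem map_units_valuation_eq_count [MeasurableSpace ℚ_[p]ˣ] [BorelSpace ℚ_[p]ˣ]
    (ν : Measure ℚ_[p]ˣ) [ν.IsMulLeftInvariant] (hν : ν {y | ‖(y : ℚ_[p])‖ = 1} = 1) :
    ν.map (fun y : ℚ_[p]ˣ => (y : ℚ_[p]).valuation) = Measure.count := by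
  have hp0 : (p : ℚ_[p]) ≠ 0 := Nat.cast_ne_zero.mpr (Fact.out : p.Prime).ne_zero
  let ϖ : ℚ_[p]ˣ := Units.mk0 (p : ℚ_[p]) hp0
  refine Measure.ext_of_singleton fun n => ?_
  have hshell : (fun y : ℚ_[p]ˣ => (y : ℚ_[p]).valuation) ⁻¹' {n} =
      (fun y => ϖ ^ (-n) * y) ⁻¹' {y | ‖(y : ℚ_[p])‖ = 1} := by
    ext y
    have hval : ((ϖ ^ (-n) * y : ℚ_[p]ˣ) : ℚ_[p]).valuation = -n + (y : ℚ_[p]).valuation := by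
      rw [Units.val_mul, Units.val_zpow_eq_zpow_val, show (ϖ : ℚ_[p]) = p from rfl,
        valuation_mul (zpow_ne_zero _ hp0) y.ne_zero, valuation_zpow, valuation_p, mul_one]
    have hnorm_one : (p : ℝ) ^ (-(0 : ℤ)) = 1 := by simp
    simp only [Set.mem_preimage, Set.mem_singleton_iff, Set.mem_ofPred_eq]
    rw [← hnorm_one, norm_units_eq_zpow_iff, hval]
    omega
  rw [Measure.map_apply measurable_units_valuation (measurableSet_singleton n), hshell,
    measure_preimage_mul, hν, Measure.count_singleton]

theorem integral_eq_tsum_of_shells {E : Type*} [NormedAddCommGroup E] [NormedSpace ℝ E]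
    [CompleteSpace E] [MeasurableSpace ℚ_[p]ˣ] [BorelSpace ℚ_[p]ˣ]
    (ν : Measure ℚ_[p]ˣ) [ν.IsMulLeftInvariant] (hν : ν {y | ‖(y : ℚ_[p])‖ = 1} = 1)
    {F : ℚ_[p]ˣ → E} {c : ℕ → E} (hc : Summable fun m => ‖c m‖)
    (hF_out : ∀ y : ℚ_[p]ˣ, 1 < ‖(y : ℚ_[p])‖ → F y = 0)
    (hF_shell : ∀ (m : ℕ) (y : ℚ_[p]ˣ), ‖(y : ℚ_[p])‖ = (p : ℝ) ^ (-(m : ℤ)) → F y = c m) :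
    ∫ y, F y ∂ν = ∑' m, c m := by
  set g : ℤ → E := Function.extend ((↑) : ℕ → ℤ) c 0 with hg_def
  have hFg : F = fun y : ℚ_[p]ˣ => g (y : ℚ_[p]).valuation := by
    funext y
    rcases le_or_gt 0 (y : ℚ_[p]).valuation with hv | hv
    · lift (y : ℚ_[p]).valuation to ℕ using hv with m hm
      rw [hg_def, Nat.cast_injective.extend_apply]
      exact hF_shell m y ((norm_units_eq_zpow_iff y m).mpr hm.symm)
    · rw [hg_def, Function.extend_apply' _ _ _ fun ⟨m, hm⟩ => by omega]
      refine hF_out y ?_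
      rw [norm_eq_zpow_neg_valuation y.ne_zero]
      exact one_lt_zpow₀ (mod_cast (Fact.out : p.Prime).one_lt) (by omega)
  have hg : Integrable g Measure.count := by
    rw [integrable_count_iff]
    have hnorm : (‖g ·‖) = Function.extend ((↑) : ℕ → ℤ) (‖c ·‖) 0 := by
      funext n
      rw [hg_def, Function.apply_extend norm]
      simp only [Function.comp_def, Pi.zero_apply, norm_zero]
      rfl
    rw [hnorm]
    exact (summable_extend_zero Nat.cast_injective).mpr hc
  rw [hFg, ← integral_map measurable_units_valuation.aemeasurable
    (hg.aestronglyMeasurable.mono_ac ?_), map_units_valuation_eq_count ν hν,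
    integral_countable hg]
  · simp [hg_def, tsum_extend_zero Nat.cast_injective]
  · rw [map_units_valuation_eq_count ν hν]

theorem map_units_eq_zpow_of_unramified {G : Type*} [Group G] (η : ℚ_[p]ˣ →* G)
    (hη : ∀ u : ℚ_[p]ˣ, ‖(u : ℚ_[p])‖ = 1 → η u = 1) {ϖ : ℚ_[p]ˣ}
    (hϖ : ‖(ϖ : ℚ_[p])‖ = (p : ℝ)⁻¹) {y : ℚ_[p]ˣ} {n : ℤ}
    (hy : ‖(y : ℚ_[p])‖ = (p : ℝ) ^ (-n)) : η y = η ϖ ^ n := by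
  have hp : (p : ℝ) ≠ 0 := Nat.cast_ne_zero.mpr (Fact.out : p.Prime).ne_zero
  have hunit : ‖((ϖ ^ (-n) * y : ℚ_[p]ˣ) : ℚ_[p])‖ = 1 := by
    rw [Units.val_mul, Units.val_zpow_eq_zpow_val, norm_mul, norm_zpow, hϖ, hy, inv_zpow',
      neg_neg, ← zpow_add₀ hp, add_neg_cancel, zpow_zero]
  calc η y = η (ϖ ^ n * (ϖ ^ (-n) * y)) := by group
    _ = η ϖ ^ n := by rw [map_mul, hη _ hunit, mul_one, map_zpow]

end Padic

theorem Complex.ofReal_zpow_cpow {x : ℝ} (hx : 0 ≤ x) (n : ℤ) (z : ℂ) :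
    ((x ^ n : ℝ) : ℂ) ^ z = ((x : ℂ) ^ z) ^ n := by
  rw [← Real.rpow_intCast, ← Complex.cpow_mul_ofReal_nonneg hx, Complex.ofReal_intCast,
    Complex.cpow_int_mul]

theorem Complex.exists_forall_re_gt_mul_norm_natCast_cpow_neg_lt_one {n : ℕ} (hn : 1 < n)
    (b : ℝ) : ∃ r : ℝ, ∀ s : ℂ, r < s.re → b * ‖(n : ℂ) ^ (-s)‖ < 1 := by
  have hn' : (1 : ℝ) < n := mod_cast hn
  refine ⟨Real.logb n (max b 1), fun s hs => ?_⟩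
  rw [Complex.norm_natCast_cpow_of_pos (by omega), Complex.neg_re, Real.rpow_neg (by positivity),
    ← div_eq_mul_inv, div_lt_one (by positivity)]
  calc b ≤ max b 1 := le_max_left _ _
    _ = (n : ℝ) ^ Real.logb n (max b 1) :=
      (Real.rpow_logb (by positivity) hn'.ne' (by positivity)).symm
    _ < (n : ℝ) ^ s.re := Real.rpow_lt_rpow_of_exponent_lt hn' hs

theorem euler_factors_mul_geometric_difference {K : Type*} [Field K] {α β t L : K}
    (hαβ : α ≠ β) (ht : t ≠ 0) (hα : 1 - t * α ≠ 0) (hβ : 1 - t * β ≠ 0) :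
    (1 - t * α) * (1 - t * β) * (1 - t * α * (t * β)) *
        (L / (α - β) * ((1 - t * α)⁻¹ * α ^ 2 - (1 - t * β)⁻¹ * β ^ 2)) =
      L / t * ((1 - t * α * (t * β)) - (1 - t * α) * (1 - t * β) * (1 - t * α * (t * β))) := by
  field_simp [sub_ne_zero.mpr hαβ]
  ring

theorem integrand_eq_geometric_of_norm_eq {ℓ : ℕ} [Fact ℓ.Prime] {α β e : ℂ} (s : ℂ)
    {η : ℚ_[ℓ]ˣ →* ℂˣ} (hη : ∀ u : ℚ_[ℓ]ˣ, ‖(u : ℚ_[ℓ])‖ = 1 → η u = 1)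
    {lu : ℚ_[ℓ]ˣ} (hlu : ‖(lu : ℚ_[ℓ])‖ = (ℓ : ℝ)⁻¹) (he : e = (η lu : ℂ)) {W WU : ℚ_[ℓ]ˣ → ℂ}
    (hWm : ∀ (m : ℕ) (y : ℚ_[ℓ]ˣ), ‖(y : ℚ_[ℓ])‖ = (ℓ : ℝ) ^ (-(m : ℤ)) →
      W y = ((ℓ : ℂ) ^ m)⁻¹ * ((α ^ (m + 1) - β ^ (m + 1)) / (α - β)))
    (hWU : ∀ y : ℚ_[ℓ]ˣ, ‖(y : ℚ_[ℓ])‖ ≤ 1 → WU y = (ℓ : ℂ) ^ 2 * W (lu * y))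
    (m : ℕ) (y : ℚ_[ℓ]ˣ) (hy : ‖(y : ℚ_[ℓ])‖ = (ℓ : ℝ) ^ (-(m : ℤ))) :
    ((‖(y : ℚ_[ℓ])‖ : ℝ) : ℂ) ^ (s - 1) * (η y : ℂ) * WU y =
      ℓ / (α - β) *
        ((e * (ℓ : ℂ) ^ (-s) * α) ^ m * α ^ 2 - (e * (ℓ : ℂ) ^ (-s) * β) ^ m * β ^ 2) := by
  have hℓ : 1 < ℓ := (Fact.out : ℓ.Prime).one_lt
  have hℓC : (ℓ : ℂ) ≠ 0 := Nat.cast_ne_zero.mpr (by omega)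
  have hy_le : ‖(y : ℚ_[ℓ])‖ ≤ 1 := hy ▸ zpow_le_one_of_nonpos₀ (mod_cast hℓ.le) (by omega)
  have hluy : ‖((lu * y : ℚ_[ℓ]ˣ) : ℚ_[ℓ])‖ = (ℓ : ℝ) ^ (-((m + 1 : ℕ) : ℤ)) := by
    rw [Units.val_mul, norm_mul, hlu, hy, ← zpow_neg_one, ← zpow_add₀ (by positivity)]
    push_cast
    ring_nf
  have hpow : ((ℓ : ℂ) ^ (s - 1)) ^ (-(m : ℤ)) = ((ℓ : ℂ) * (ℓ : ℂ) ^ (-s)) ^ m := by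
    rw [zpow_neg, zpow_natCast, ← inv_pow, ← Complex.cpow_neg, neg_sub, sub_eq_add_neg,
      Complex.cpow_add _ _ hℓC, Complex.cpow_one]
  rw [hWU y hy_le, hWm (m + 1) _ hluy, Padic.map_units_eq_zpow_of_unramified η hη hlu hy,
    Units.val_zpow_eq_zpow_val, ← he, hy, Complex.ofReal_zpow_cpow (by positivity),
    Complex.ofReal_natCast, hpow, zpow_natCast]
  field_simp
  ring

theorem stmt8_general (ℓ : ℕ) [Fact ℓ.Prime]
    [MeasurableSpace ℚ_[ℓ]ˣ] [BorelSpace ℚ_[ℓ]ˣ]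
    (ν : Measure ℚ_[ℓ]ˣ) [ν.IsHaarMeasure]
    (hν : ν {y : ℚ_[ℓ]ˣ | ‖(y : ℚ_[ℓ])‖ = 1} = 1)
    (α β : ℂ) (hαβ : α ≠ β)
    (η : ℚ_[ℓ]ˣ →* ℂˣ) (hη : ∀ u : ℚ_[ℓ]ˣ, ‖(u : ℚ_[ℓ])‖ = 1 → η u = 1)
    (lu : ℚ_[ℓ]ˣ) (hlu : (lu : ℚ_[ℓ]) = (ℓ : ℚ_[ℓ]))
    (e : ℂ) (he : e = (η lu : ℂ))
    (W WU : ℚ_[ℓ]ˣ → ℂ)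
    (hWm : ∀ (m : ℕ) (y : ℚ_[ℓ]ˣ), ‖(y : ℚ_[ℓ])‖ = (ℓ : ℝ) ^ (-(m : ℤ)) →
      W y = ((ℓ : ℂ) ^ m)⁻¹ * ((α ^ (m + 1) - β ^ (m + 1)) / (α - β)))
    (hWU0 : ∀ y : ℚ_[ℓ]ˣ, 1 < ‖(y : ℚ_[ℓ])‖ → WU y = 0)
    (hWU : ∀ y : ℚ_[ℓ]ˣ, ‖(y : ℚ_[ℓ])‖ ≤ 1 → WU y = (ℓ : ℂ) ^ 2 * W (lu * y)) :
    ∃ r : ℝ, ∀ s : ℂ, r < s.re →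
      ((1 - α * e * (ℓ : ℂ) ^ (-s)) * (1 - β * e * (ℓ : ℂ) ^ (-s)) *
            (1 - α * β * e ^ 2 * (ℓ : ℂ) ^ (-(2 * s)))) *
          (∫ y : ℚ_[ℓ]ˣ, ((‖(y : ℚ_[ℓ])‖ : ℝ) : ℂ) ^ (s - 1) * (η y : ℂ) * WU y ∂ν) =
        (ℓ : ℂ) ^ (s + 1) / e *
          ((1 - α * β * e ^ 2 * (ℓ : ℂ) ^ (-(2 * s))) -
            (1 - α * e * (ℓ : ℂ) ^ (-s)) * (1 - β * e * (ℓ : ℂ) ^ (-s)) *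
              (1 - α * β * e ^ 2 * (ℓ : ℂ) ^ (-(2 * s)))) := by
  have hℓ : 1 < ℓ := (Fact.out : ℓ.Prime).one_lt
  have hℓC : (ℓ : ℂ) ≠ 0 := Nat.cast_ne_zero.mpr (by omega)
  have hlu_norm : ‖(lu : ℚ_[ℓ])‖ = (ℓ : ℝ)⁻¹ := by rw [hlu, Padic.norm_p]
  obtain ⟨rα, hrα⟩ := Complex.exists_forall_re_gt_mul_norm_natCast_cpow_neg_lt_one hℓ ‖e * α‖
  obtain ⟨rβ, hrβ⟩ := Complex.exists_forall_re_gt_mul_norm_natCast_cpow_neg_lt_one hℓ ‖e * β‖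
  refine ⟨max rα rβ, fun s hs => ?_⟩
  set q := (ℓ : ℂ) ^ (-s) with hq
  have htα : ‖e * q * α‖ < 1 := by
    rw [mul_right_comm, norm_mul]
    exact hrα s (lt_of_le_of_lt (le_max_left _ _) hs)
  have htβ : ‖e * q * β‖ < 1 := by
    rw [mul_right_comm, norm_mul]
    exact hrβ s (lt_of_le_of_lt (le_max_right _ _) hs)
  have hc := (((hasSum_geometric_of_norm_lt_one htα).mul_right (α ^ 2)).sub
    ((hasSum_geometric_of_norm_lt_one htβ).mul_right (β ^ 2))).mul_left ((ℓ : ℂ) / (α - β))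
  rw [Padic.integral_eq_tsum_of_shells ν hν hc.summable.norm
    (fun y hy => by rw [hWU0 y hy, mul_zero])
    (integrand_eq_geometric_of_norm_eq s hη hlu_norm he hWm hWU), hc.tsum_eq]
  have hq2 : (ℓ : ℂ) ^ (-(2 * s)) = q ^ 2 := by
    rw [hq, ← Complex.cpow_nat_mul, Nat.cast_ofNat, mul_neg]
  have hqs : (ℓ : ℂ) ^ (s + 1) = ℓ / q := by
    rw [hq, Complex.cpow_add _ _ hℓC, Complex.cpow_one, Complex.cpow_neg, div_inv_eq_mul, mul_comm]
  have ht0 : e * q ≠ 0 :=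
    mul_ne_zero (he ▸ Units.ne_zero _) (Complex.cpow_ne_zero_iff.mpr (Or.inl hℓC))
  have hfactors := euler_factors_mul_geometric_difference (L := (ℓ : ℂ)) hαβ ht0
    (sub_ne_zero.mpr fun h => by simp [← h] at htα) (sub_ne_zero.mpr fun h => by simp [← h] at htβ)
  rw [hq2, hqs]
  convert hfactors using 2 <;> ring

/-- Action of `U(ℓ)` on the zeta integral, inert case: if `φ₀` is the normalized
spherical vector and `U(ℓ)` acts on the Whittaker model by
`𝒲_{U(ℓ)φ₀}(diag(y,1)) = 0` for `v(y) < 0` and `= ℓ²𝒲_{φ₀}(diag(ℓy,1))` for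
`v(y) ≥ 0`, then
`Z(σ,η,U(ℓ)φ₀,s) = (ℓ^{s+1}/η(ℓ))[L(η²χ_σ,2s)⁻¹ − L(As(σ⊗η),s)⁻¹]`. -/
theorem stmt8 (ℓ : ℕ) [Fact ℓ.Prime]
    [MeasurableSpace ℚ_[ℓ]ˣ] [BorelSpace ℚ_[ℓ]ˣ]
    (ν : Measure ℚ_[ℓ]ˣ) [ν.IsHaarMeasure]
    (hν : ν {y : ℚ_[ℓ]ˣ | ‖(y : ℚ_[ℓ])‖ = 1} = 1)
    (α β : ℂ) (hαβ : α ≠ β)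
    (η : ℚ_[ℓ]ˣ →* ℂˣ) (hη : ∀ u : ℚ_[ℓ]ˣ, ‖(u : ℚ_[ℓ])‖ = 1 → η u = 1)
    (lu : ℚ_[ℓ]ˣ) (hlu : (lu : ℚ_[ℓ]) = (ℓ : ℚ_[ℓ]))
    (e : ℂ) (he : e = (η lu : ℂ))
    (W WU : ℚ_[ℓ]ˣ → ℂ)
    (hW0 : ∀ y : ℚ_[ℓ]ˣ, 1 < ‖(y : ℚ_[ℓ])‖ → W y = 0)
    (hWm : ∀ (m : ℕ) (y : ℚ_[ℓ]ˣ), ‖(y : ℚ_[ℓ])‖ = (ℓ : ℝ) ^ (-(m : ℤ)) →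
      W y = ((ℓ : ℂ) ^ m)⁻¹ * ((α ^ (m + 1) - β ^ (m + 1)) / (α - β)))
    (hWU0 : ∀ y : ℚ_[ℓ]ˣ, 1 < ‖(y : ℚ_[ℓ])‖ → WU y = 0)
    (hWU : ∀ y : ℚ_[ℓ]ˣ, ‖(y : ℚ_[ℓ])‖ ≤ 1 → WU y = (ℓ : ℂ) ^ 2 * W (lu * y)) :
    ∃ r : ℝ, ∀ s : ℂ, r < s.re →
      ((1 - α * e * (ℓ : ℂ) ^ (-s)) * (1 - β * e * (ℓ : ℂ) ^ (-s)) *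
            (1 - α * β * e ^ 2 * (ℓ : ℂ) ^ (-(2 * s)))) *
          (∫ y : ℚ_[ℓ]ˣ, ((‖(y : ℚ_[ℓ])‖ : ℝ) : ℂ) ^ (s - 1) * (η y : ℂ) * WU y ∂ν) =
        (ℓ : ℂ) ^ (s + 1) / e *
          ((1 - α * β * e ^ 2 * (ℓ : ℂ) ^ (-(2 * s))) -
            (1 - α * e * (ℓ : ℂ) ^ (-s)) * (1 - β * e * (ℓ : ℂ) ^ (-s)) *
              (1 - α * β * e ^ 2 * (ℓ : ℂ) ^ (-(2 * s)))) :=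
  stmt8_general ℓ ν hν α β hαβ η hη lu hlu e he W WU hWm hWU0 hWU
end

section
/- Let σ = I(χ₁,ψ₁) ⊗ I(χ₂,ψ₂) be an unramified principal series of GL₂(ℚ_ℓ)×GL₂(ℚ_ℓ) with Satake parameters α,β,γ,δ, η an unramified character of ℚ_ℓ^×, L(σ⊗η,s) = [(1−αγη(ℓ)ℓ^{−s})(1−αδη(ℓ)ℓ^{−s})(1−βγη(ℓ)ℓ^{−s})(1−βδη(ℓ)ℓ^{−s})]^{−1}, and Z(σ,η,f,s) = L(σ⊗η,s)^{−1}∫_{ℚ_ℓ^×}|y|^{s−1}η(y)𝒲_f(diag(y,1),diag(y,1))d^×y. Then for the normalized spherical vector φ₀ and Re(s) sufficiently large, Z(σ,η,φ₀,s) = (1 − χ_σ(ℓ)η(ℓ)²ℓ^{−2s}), where χ_σ = χ₁ψ₁χ₂ψ₂. -/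
/-!
On the shell `‖y‖ = ℓ^{-m}` the integrand is constant, equal to `h_m(α,β) h_m(γ,δ) X^m` with
`X = η(ℓ) ℓ^{-s}`, and every shell has volume `vol(ℤ_ℓ^×) = 1` by translation invariance. The
integral is therefore the generating series `∑ h_m(α,β) h_m(γ,δ) X^m`; writing each `h_m` as a
difference quotient splits it into four geometric series, whose sum is
`(1 - αβγδX²) / ((1 - αγX)(1 - αδX)(1 - βγX)(1 - βδX))`.
-/

open MeasureTheory

theorem integrable_and_hasSum_integral_of_eqOn_disjoint {X E ι : Type*} [MeasurableSpace X]
    [NormedAddCommGroup E] [NormedSpace ℝ E] [CompleteSpace E] [Countable ι] {μ : Measure X}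
    {S : ι → Set X} (hS : ∀ i, MeasurableSet (S i)) (hd : Pairwise (Function.onFun Disjoint S))
    (hμ : ∀ i, μ (S i) ≠ ⊤) {f : X → E} {c : ι → E} (hf : ∀ i, ∀ x ∈ S i, f x = c i)
    (hf0 : ∀ x, (∀ i, x ∉ S i) → f x = 0) (hc : Summable fun i => μ.real (S i) * ‖c i‖) :
    Integrable f μ ∧ HasSum (fun i => μ.real (S i) • c i) (∫ x, f x ∂μ) := by
  have hfS : ∀ i, IntegrableOn f (S i) μ := fun i =>
    (integrableOn_const (hμ i)).congr_fun (fun x hx => (hf i x hx).symm) (hS i)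
  have hint : ∀ i, ∫ x in S i, f x ∂μ = μ.real (S i) • c i := fun i => by
    rw [setIntegral_congr_fun (hS i) (hf i), setIntegral_const]
  have hf0' : ∀ x, x ∉ ⋃ i, S i → f x = 0 := fun x hx =>
    hf0 x fun i hi => hx (Set.mem_iUnion_of_mem i hi)
  have hU : IntegrableOn f (⋃ i, S i) μ := by
    refine integrableOn_iUnion_of_summable_integral_norm hfS (hc.congr fun i => ?_)
    rw [setIntegral_congr_fun (hS i) fun x hx => congrArg norm (hf i x hx), setIntegral_const,
      smul_eq_mul]
  refine ⟨hU.integrable_of_forall_notMem_eq_zero hf0', ?_⟩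
  rw [← setIntegral_eq_integral_of_forall_compl_eq_zero hf0']
  exact (hasSum_integral_iUnion hS hd hU).congr_fun fun i => (hint i).symm

theorem Complex.ofReal_zpow_neg_cpow_mul_inv_pow {x : ℝ} (hx : 0 < x) (m : ℕ) (s : ℂ) :
    ((x ^ (-(m : ℤ)) : ℝ) : ℂ) ^ (s - 1) * ((x : ℂ) ^ m)⁻¹ = ((x : ℂ) ^ (-s)) ^ m := by
  have hx0 : (x : ℂ) ≠ 0 := by exact_mod_cast hx.ne'
  rw [← Real.rpow_intCast, ← Complex.cpow_mul_ofReal_nonneg hx.le, ← Complex.cpow_natCast,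
    ← Complex.cpow_neg, ← Complex.cpow_add _ _ hx0, ← Complex.cpow_nat_mul]
  congr 1
  push_cast
  ring

def normShell (p : ℕ) [Fact p.Prime] (m : ℤ) : Set ℚ_[p]ˣ :=
  {y | ‖(y : ℚ_[p])‖ = (p : ℝ) ^ (-m)}

@[simp]
theorem normShell_zero (p : ℕ) [Fact p.Prime] :
    normShell p 0 = {y : ℚ_[p]ˣ | ‖(y : ℚ_[p])‖ = 1} := by
  simp [normShell]

namespace normShell

variable {p : ℕ} [Fact p.Prime]

private theorem one_lt_prime : (1 : ℝ) < p := Nat.one_lt_cast.mpr (Fact.out : p.Prime).one_lt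

theorem exists_mem (y : ℚ_[p]ˣ) : ∃ m : ℤ, y ∈ normShell p m :=
  ⟨_, Padic.norm_eq_zpow_neg_valuation y.ne_zero⟩

theorem one_lt_norm_of_notMem {y : ℚ_[p]ˣ} (hy : ∀ m : ℕ, y ∉ normShell p m) :
    1 < ‖(y : ℚ_[p])‖ := by
  obtain ⟨m, hm⟩ := exists_mem y
  have hneg : m < 0 := by
    by_contra! h
    lift m to ℕ using h
    exact hy m hm
  rw [hm]
  exact one_lt_zpow₀ one_lt_prime (by omega)

theorem pairwise_disjoint : Pairwise (Function.onFun Disjoint (normShell p)) := by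
  intro m n hmn
  refine Set.disjoint_left.mpr fun y hym hyn => hmn ?_
  have := (zpow_right_injective₀ (zero_lt_one.trans one_lt_prime) one_lt_prime.ne').eq_iff.mp
    (hym.symm.trans hyn)
  omega

theorem measurableSet [MeasurableSpace ℚ_[p]ˣ] [BorelSpace ℚ_[p]ˣ] (m : ℤ) :
    MeasurableSet (normShell p m) :=
  (continuous_norm.comp Units.continuous_val).measurable (measurableSet_singleton _)

section uniformizer

variable {ϖ : ℚ_[p]ˣ} (hϖ : ‖(ϖ : ℚ_[p])‖ = (p : ℝ)⁻¹)
include hϖ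

theorem zpow_mul_mem_iff (k m : ℤ) {y : ℚ_[p]ˣ} :
    ϖ ^ k * y ∈ normShell p (k + m) ↔ y ∈ normShell p m := by
  have hp0 : (p : ℝ) ≠ 0 := by exact_mod_cast (Fact.out : p.Prime).ne_zero
  simp only [normShell, Set.mem_ofPred_eq, Units.val_mul, Units.val_zpow_eq_zpow_val, norm_mul,
    norm_zpow, hϖ, inv_zpow', neg_add, zpow_add₀ hp0]
  exact mul_right_inj' (zpow_ne_zero _ hp0)

theorem _root_.MonoidHom.eq_zpow_of_mem_normShell {G : Type*} [Group G] (η : ℚ_[p]ˣ →* G)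
    (hη : ∀ u : ℚ_[p]ˣ, ‖(u : ℚ_[p])‖ = 1 → η u = 1) {m : ℤ} {y : ℚ_[p]ˣ}
    (hy : y ∈ normShell p m) : η y = η ϖ ^ m := by
  have hu : η (ϖ ^ (-m) * y) = 1 :=
    hη _ (by simpa using (zpow_mul_mem_iff hϖ (-m) m).mpr hy)
  rw [map_mul, map_zpow, zpow_neg, inv_mul_eq_one] at hu
  exact hu.symm

theorem ofReal_norm_cpow_mul_mul_inv_pow {η : ℚ_[p]ˣ →* ℂˣ}
    (hη : ∀ u : ℚ_[p]ˣ, ‖(u : ℚ_[p])‖ = 1 → η u = 1) {m : ℕ} {y : ℚ_[p]ˣ}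
    (hy : y ∈ normShell p m) (s : ℂ) :
    ((‖(y : ℚ_[p])‖ : ℝ) : ℂ) ^ (s - 1) * (η y : ℂ) * ((p : ℂ) ^ m)⁻¹ =
      ((η ϖ : ℂ) * (p : ℂ) ^ (-s)) ^ m := by
  have hpow :=
    Complex.ofReal_zpow_neg_cpow_mul_inv_pow (x := p) (zero_lt_one.trans one_lt_prime) m s
  rw [Complex.ofReal_natCast] at hpow
  rw [hy, η.eq_zpow_of_mem_normShell hϖ hη hy, Units.val_zpow_eq_zpow_val, zpow_natCast, mul_pow,
    ← hpow]
  ring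

end uniformizer

theorem measure_eq [MeasurableSpace ℚ_[p]ˣ] [BorelSpace ℚ_[p]ˣ] (ν : Measure ℚ_[p]ˣ)
    [ν.IsMulLeftInvariant] (m : ℤ) : ν (normShell p m) = ν (normShell p 0) := by
  have hϖ : ‖((Units.mk0 (p : ℚ_[p]) (by simp [(Fact.out : p.Prime).ne_zero]) : ℚ_[p]ˣ) :
      ℚ_[p])‖ = (p : ℝ)⁻¹ := Padic.norm_p
  rw [← measure_preimage_mul ν (_ ^ m)]
  congr 1
  ext y
  simpa using zpow_mul_mem_iff hϖ m 0 (y := y)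

theorem integrable_and_hasSum_integral {E : Type*} [NormedAddCommGroup E] [NormedSpace ℝ E]
    [CompleteSpace E] [MeasurableSpace ℚ_[p]ˣ] [BorelSpace ℚ_[p]ˣ] {ν : Measure ℚ_[p]ˣ}
    [ν.IsMulLeftInvariant] (hν : ν {y : ℚ_[p]ˣ | ‖(y : ℚ_[p])‖ = 1} = 1) {f : ℚ_[p]ˣ → E}
    {c : ℕ → E} (hf : ∀ (m : ℕ), ∀ y ∈ normShell p m, f y = c m)
    (hf0 : ∀ y : ℚ_[p]ˣ, 1 < ‖(y : ℚ_[p])‖ → f y = 0) (hc : Summable fun m => ‖c m‖) :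
    Integrable f ν ∧ HasSum c (∫ y, f y ∂ν) := by
  have hvol : ∀ m : ℕ, ν (normShell p m) = 1 := fun m => by
    rw [measure_eq, normShell_zero, hν]
  have hvol' : ∀ m : ℕ, ν.real (normShell p m) = 1 := fun m => by
    rw [measureReal_def, hvol, ENNReal.toReal_one]
  simpa only [hvol', one_smul] using integrable_and_hasSum_integral_of_eqOn_disjoint (μ := ν)
    (fun m : ℕ => measurableSet (m : ℤ))
    (pairwise_disjoint.comp_of_injective Nat.cast_injective) (fun m => by simp [hvol m]) hf
    (fun y hy => hf0 y (one_lt_norm_of_notMem hy)) (by simpa only [hvol', one_mul] using hc)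

end normShell

theorem exists_forall_re_gt_norm_mul_natCast_cpow_neg_lt_one {n : ℕ} (hn : 1 < n)
    (t : Finset ℂ) : ∃ r : ℝ, ∀ s : ℂ, r < s.re → ∀ x ∈ t, ‖x * (n : ℂ) ^ (-s)‖ < 1 := by
  set M := max (∑ x ∈ t, ‖x‖) 1
  have hn' : (1 : ℝ) < n := by exact_mod_cast hn
  refine ⟨Real.logb n M, fun s hs x hx => ?_⟩
  have hM : M < (n : ℝ) ^ s.re := by
    rwa [← Real.rpow_logb (by positivity) hn'.ne' (by positivity : 0 < M),
      Real.rpow_lt_rpow_left_iff hn']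
  have hxM : ‖x‖ ≤ M := (Finset.single_le_sum (fun y _ => norm_nonneg y) hx).trans (le_max_left _ _)
  rw [norm_mul, Complex.norm_natCast_cpow_of_pos (by omega), Complex.neg_re,
    Real.rpow_neg (by positivity), ← div_eq_mul_inv, div_lt_one (by positivity)]
  exact hxM.trans_lt hM

theorem one_sub_ne_zero_of_norm_lt_one {R : Type*} [NormedRing R] [NormOneClass R] {x : R}
    (hx : ‖x‖ < 1) : 1 - x ≠ 0 := fun h => by
  rw [← eq_of_sub_eq_zero h, norm_one] at hx
  exact lt_irrefl _ hx

/-- The paper's `h_m(a, b)`. For `a = b` the division by zero gives `0`, not `(m + 1) a^m`. -/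
noncomputable def completeHomogeneous₂ (a b : ℂ) (m : ℕ) : ℂ :=
  (a ^ (m + 1) - b ^ (m + 1)) / (a - b)

theorem hasSum_mul_mul_pow_self {a X : ℂ} (h : ‖a * X‖ < 1) :
    HasSum (fun m : ℕ => a * (a * X) ^ m) (a / (1 - a * X)) := by
  simpa [div_eq_mul_inv] using (hasSum_geometric_of_norm_lt_one h).mul_left a

theorem hasSum_completeHomogeneous₂_mul_completeHomogeneous₂_mul_pow {α β γ δ X : ℂ}
    (hαβ : α ≠ β) (hγδ : γ ≠ δ) (h₁ : ‖α * γ * X‖ < 1) (h₂ : ‖α * δ * X‖ < 1)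
    (h₃ : ‖β * γ * X‖ < 1) (h₄ : ‖β * δ * X‖ < 1) :
    HasSum (fun m => completeHomogeneous₂ α β m * completeHomogeneous₂ γ δ m * X ^ m)
      ((1 - α * β * γ * δ * X ^ 2) /
        ((1 - α * γ * X) * (1 - α * δ * X) * (1 - β * γ * X) * (1 - β * δ * X))) := by
  have hαβ' := sub_ne_zero.mpr hαβ
  have hγδ' := sub_ne_zero.mpr hγδ
  have hs := ((((hasSum_mul_mul_pow_self h₁).sub (hasSum_mul_mul_pow_self h₂)).sub
    (hasSum_mul_mul_pow_self h₃)).add (hasSum_mul_mul_pow_self h₄)).div_const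
      ((α - β) * (γ - δ))
  have hvalue : (1 - α * β * γ * δ * X ^ 2) /
        ((1 - α * γ * X) * (1 - α * δ * X) * (1 - β * γ * X) * (1 - β * δ * X)) =
      (α * γ / (1 - α * γ * X) - α * δ / (1 - α * δ * X) - β * γ / (1 - β * γ * X) +
        β * δ / (1 - β * δ * X)) / ((α - β) * (γ - δ)) := by
    field_simp [one_sub_ne_zero_of_norm_lt_one h₁, one_sub_ne_zero_of_norm_lt_one h₂,
      one_sub_ne_zero_of_norm_lt_one h₃, one_sub_ne_zero_of_norm_lt_one h₄]
    ring
  rw [hvalue]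
  refine hs.congr_fun fun m => ?_
  simp only [completeHomogeneous₂]
  field_simp
  ring

/-- Zeta integral at the normalized spherical vector, split case: for
`σ = I(χ₁,ψ₁)⊗I(χ₂,ψ₂)` with Satake parameters `α,β,γ,δ` and `η` unramified, for
`Re(s)` sufficiently large,
`Z(σ,η,φ₀,s) = L(σ⊗η,s)⁻¹ ∫ |y|^{s−1} η(y) 𝒲₀(diag(y,1),diag(y,1)) d^×y
 = 1 − χ_σ(ℓ)η(ℓ)²ℓ^{−2s}` with `χ_σ(ℓ) = αβγδ`. -/
theorem stmt10 (ℓ : ℕ) [Fact ℓ.Prime]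
    [MeasurableSpace ℚ_[ℓ]ˣ] [BorelSpace ℚ_[ℓ]ˣ]
    (ν : Measure ℚ_[ℓ]ˣ) [ν.IsHaarMeasure]
    (hν : ν {y : ℚ_[ℓ]ˣ | ‖(y : ℚ_[ℓ])‖ = 1} = 1)
    (α β γ δ : ℂ) (hαβ : α ≠ β) (hγδ : γ ≠ δ)
    (η : ℚ_[ℓ]ˣ →* ℂˣ) (hη : ∀ u : ℚ_[ℓ]ˣ, ‖(u : ℚ_[ℓ])‖ = 1 → η u = 1)
    (lu : ℚ_[ℓ]ˣ) (hlu : (lu : ℚ_[ℓ]) = (ℓ : ℚ_[ℓ]))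
    (e : ℂ) (he : e = (η lu : ℂ))
    (W : ℚ_[ℓ]ˣ → ℂ)
    (hW0 : ∀ y : ℚ_[ℓ]ˣ, 1 < ‖(y : ℚ_[ℓ])‖ → W y = 0)
    (hWm : ∀ (m : ℕ) (y : ℚ_[ℓ]ˣ), ‖(y : ℚ_[ℓ])‖ = (ℓ : ℝ) ^ (-(m : ℤ)) →
      W y = ((ℓ : ℂ) ^ m)⁻¹ * ((α ^ (m + 1) - β ^ (m + 1)) / (α - β)) *
        ((γ ^ (m + 1) - δ ^ (m + 1)) / (γ - δ))) :
    ∃ r : ℝ, ∀ s : ℂ, r < s.re →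
      Integrable (fun y : ℚ_[ℓ]ˣ =>
        ((‖(y : ℚ_[ℓ])‖ : ℝ) : ℂ) ^ (s - 1) * (η y : ℂ) * W y) ν ∧
      ((1 - α * γ * e * (ℓ : ℂ) ^ (-s)) * (1 - α * δ * e * (ℓ : ℂ) ^ (-s)) *
            (1 - β * γ * e * (ℓ : ℂ) ^ (-s)) * (1 - β * δ * e * (ℓ : ℂ) ^ (-s))) *
          (∫ y : ℚ_[ℓ]ˣ, ((‖(y : ℚ_[ℓ])‖ : ℝ) : ℂ) ^ (s - 1) * (η y : ℂ) * W y ∂ν) =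
        1 - α * β * γ * δ * e ^ 2 * (ℓ : ℂ) ^ (-(2 * s)) := by
  have hℓ : 1 < ℓ := (Fact.out : ℓ.Prime).one_lt
  have hlu' : ‖(lu : ℚ_[ℓ])‖ = (ℓ : ℝ)⁻¹ := by rw [hlu, Padic.norm_p]
  obtain ⟨r, hr⟩ := exists_forall_re_gt_norm_mul_natCast_cpow_neg_lt_one hℓ
    {α * γ * e, α * δ * e, β * γ * e, β * δ * e}
  refine ⟨r, fun s hs => ?_⟩
  set X := e * (ℓ : ℂ) ^ (-s) with hX
  have h₁ : ‖α * γ * X‖ < 1 := by rw [← mul_assoc]; exact hr s hs _ (by simp)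
  have h₂ : ‖α * δ * X‖ < 1 := by rw [← mul_assoc]; exact hr s hs _ (by simp)
  have h₃ : ‖β * γ * X‖ < 1 := by rw [← mul_assoc]; exact hr s hs _ (by simp)
  have h₄ : ‖β * δ * X‖ < 1 := by rw [← mul_assoc]; exact hr s hs _ (by simp)
  have hseries := hasSum_completeHomogeneous₂_mul_completeHomogeneous₂_mul_pow hαβ hγδ h₁ h₂ h₃ h₄
  have hshell : ∀ (m : ℕ), ∀ y ∈ normShell ℓ m,
      ((‖(y : ℚ_[ℓ])‖ : ℝ) : ℂ) ^ (s - 1) * (η y : ℂ) * W y =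
        completeHomogeneous₂ α β m * completeHomogeneous₂ γ δ m * X ^ m := fun m y hy => by
    rw [hWm m y hy, hX, he, ← normShell.ofReal_norm_cpow_mul_mul_inv_pow hlu' hη hy s]
    simp only [completeHomogeneous₂]
    ring
  obtain ⟨hint, hsum⟩ := normShell.integrable_and_hasSum_integral hν hshell
    (fun y hy => by rw [hW0 y hy, mul_zero]) (summable_norm_iff.mpr hseries.summable)
  refine ⟨hint, ?_⟩
  have hP : (1 - α * γ * X) * (1 - α * δ * X) * (1 - β * γ * X) * (1 - β * δ * X) ≠ 0 :=
    mul_ne_zero (mul_ne_zero (mul_ne_zero (one_sub_ne_zero_of_norm_lt_one h₁)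
      (one_sub_ne_zero_of_norm_lt_one h₂)) (one_sub_ne_zero_of_norm_lt_one h₃))
      (one_sub_ne_zero_of_norm_lt_one h₄)
  rw [hsum.unique hseries, mul_div_assoc', div_eq_iff hP, hX, neg_mul_eq_mul_neg,
    Complex.cpow_ofNat_mul]
  ring
end
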